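/- Let a > 0, c > 0 and q a positive integer. Define Υ(z) = ∑_{n≥0} (-1)ⁿcⁿ(n+1) zⁿ/(n! Γ(qn+a)) · Γ(a). If Υ(z) = ∏_{n≥1}(1 - z/ςₙ) with positive zeros ςₙ and ∑1/ςₙ < ∞, then the Euler–Rayleigh sums satisfy κ₁ = 2cΓ(a)/Γ(q+a) and κ₂ = 4c²Γ(a)²/Γ(q+a)² - 3c²Γ(a)/Γ(2q+a). -/

import Mathlib

open Finset


lemma abs_le_three (x y z : ℝ) : |x| ≤ |x + y + z| + |y| + |z| := by
  have h1 : |x| ≤ |x + y + z| + |(-y) + (-z)| := by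
    have e : x = (x + y + z) + ((-y) + (-z)) := by ring
    calc |x| = |(x + y + z) + ((-y) + (-z))| := by rw [← e]
      _ ≤ _ := abs_add_le _ _
  have h2 : |(-y) + (-z)| ≤ |y| + |z| := by
    have := abs_add_le (-y) (-z)
    simpa using this
  linarith

lemma log3 (x : ℝ) (hx : |x| ≤ 1/2) : |Real.log (1 - x) + x + x^2/2| ≤ 2*|x|^3 := by
  have h1 : |x| < 1 := lt_of_le_of_lt hx (by norm_num)
  have h2 := Real.abs_log_sub_add_sum_range_le h1 2
  have h3 : ∑ i ∈ range 2, x ^ (i + 1) / (i + 1) = x + x ^ 2 / 2 := by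
    simp [Finset.sum_range_succ]
    norm_num
  rw [h3] at h2
  have h4 : 1 / 2 ≤ 1 - |x| := by linarith
  have h5 : |x| ^ 3 / (1 - |x|) ≤ 2 * |x| ^ 3 := by
    rw [div_le_iff₀ (by linarith)]
    nlinarith [pow_nonneg (abs_nonneg x) 3]
  have he : Real.log (1 - x) + x + x ^ 2 / 2 = (x + x ^ 2 / 2) + Real.log (1 - x) := by ring
  rw [he]
  calc |(x + x ^ 2 / 2) + Real.log (1 - x)| ≤ |x| ^ (2+1) / (1 - |x|) := h2
    _ = |x| ^ 3 / (1 - |x|) := by norm_num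
    _ ≤ 2 * |x| ^ 3 := h5

lemma exp3 (x : ℝ) (hx : |x| ≤ 1) : |Real.exp x - (1 + x + x^2/2)| ≤ |x|^3 := by
  have h1 := Real.exp_bound hx (by norm_num : 0 < 3)
  have h2 : ∑ m ∈ range 3, x ^ m / m.factorial = 1 + x + x ^ 2 / 2 := by
    simp [Finset.sum_range_succ]
  rw [h2] at h1
  refine h1.trans ?_
  have hfac : (((3:ℕ).succ : ℝ) / ((3:ℕ).factorial * 3)) ≤ 1 := by
    norm_num [Nat.factorial]
  nlinarith [pow_nonneg (abs_nonneg x) 3]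

/-- The log-sum estimate. -/
lemma logsum_est (t : ℕ → ℝ) (ht : ∀ n, 0 < t n) (hsum : Summable t)
    (A B : ℝ) (hA_def : A = ∑' n, t n) (hB_def : B = ∑' n, (t n) ^ 2)
    (z : ℝ) (hz1 : |z| ≤ 1) (hz2 : |z| ≤ 1 / (2 * A)) :
    Summable (fun n => Real.log (1 - z * t n)) ∧
    (∀ n, 0 < 1 - z * t n) ∧
    |(∑' n, Real.log (1 - z * t n)) + z * A + z ^ 2 / 2 * B| ≤ 2 * |z| ^ 3 * A ^ 3 := by
  have hA0 : 0 < A := hA_def ▸ Summable.tsum_pos hsum (fun n => (ht n).le) 0 (ht 0)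
  have htle : ∀ n, t n ≤ A := fun n => hA_def ▸ Summable.le_tsum hsum n (fun m _ => (ht m).le)
  have hBsum : Summable (fun n => (t n) ^ 2) := by
    refine Summable.of_nonneg_of_le (fun n => sq_nonneg _) (fun n => ?_) (hsum.mul_left A)
    nlinarith [htle n, (ht n).le]
  have hzA : |z| * A ≤ 1 / 2 := by
    rw [le_div_iff₀ (by positivity)] at hz2
    linarith [mul_comm (|z|) A]
  have hx : ∀ n, |z * t n| ≤ 1 / 2 := by
    intro n
    rw [abs_mul, abs_of_pos (ht n)]
    calc |z| * t n ≤ |z| * A := mul_le_mul_of_nonneg_left (htle n) (abs_nonneg z)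
      _ ≤ 1 / 2 := hzA
  have hpos : ∀ n, 0 < 1 - z * t n := by
    intro n
    have := abs_le.mp (hx n)
    linarith [this.2]
  have hlog : ∀ n, |Real.log (1 - z * t n) + z * t n + z ^ 2 / 2 * (t n) ^ 2|
      ≤ 2 * |z| ^ 3 * A ^ 2 * t n := by
    intro n
    have h2 := log3 (z * t n) (hx n)
    have he : Real.log (1 - z * t n) + z * t n + z ^ 2 / 2 * t n ^ 2
        = Real.log (1 - z * t n) + (z * t n) + (z * t n) ^ 2 / 2 := by ring
    rw [he]
    refine h2.trans ?_
    have h6 : |z * t n| ^ 3 ≤ |z| ^ 3 * A ^ 2 * t n := by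
      rw [abs_mul, abs_of_pos (ht n), mul_pow]
      have h7 : t n ^ 3 ≤ A ^ 2 * t n := by
        nlinarith [mul_nonneg (mul_nonneg (ht n).le (sub_nonneg.2 (htle n)))
          (by linarith [(ht n).le] : (0:ℝ) ≤ A + t n)]
      nlinarith [pow_nonneg (abs_nonneg z) 3]
    nlinarith
  have hLsum : Summable (fun n => Real.log (1 - z * t n)) := by
    apply summable_abs_iff.mp
    refine Summable.of_nonneg_of_le (fun n => abs_nonneg _) (fun n => ?_)
      (hsum.mul_left (2 * A ^ 2 + 1 + A / 2))
    have h1 := hlog n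
    have h2 := abs_le_three (Real.log (1 - z * t n)) (z * t n) (z ^ 2 / 2 * (t n) ^ 2)
    have h3 : |z * t n| ≤ t n := by
      rw [abs_mul, abs_of_pos (ht n)]
      calc |z| * t n ≤ 1 * t n := mul_le_mul_of_nonneg_right hz1 (ht n).le
        _ = t n := one_mul _
    have h4 : |z ^ 2 / 2 * (t n) ^ 2| ≤ A / 2 * t n := by
      rw [abs_mul, abs_of_nonneg (sq_nonneg (t n)), abs_div,
        abs_of_nonneg (sq_nonneg z), abs_two]
      have hz2' : z ^ 2 ≤ 1 := by nlinarith [sq_abs z, abs_nonneg z]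
      nlinarith [htle n, (ht n).le, sq_nonneg (t n),
        mul_nonneg (sub_nonneg.2 hz2') (sq_nonneg (t n)),
        mul_nonneg (ht n).le (sub_nonneg.2 (htle n))]
    have h5 : 2 * |z| ^ 3 * A ^ 2 * t n ≤ 2 * A ^ 2 * t n := by
      have h8 : |z| ^ 3 ≤ 1 := by
        calc |z| ^ 3 ≤ 1 ^ 3 := pow_le_pow_left₀ (abs_nonneg z) hz1 3
          _ = 1 := one_pow 3
      nlinarith [mul_nonneg (mul_nonneg (sub_nonneg.2 h8) (sq_nonneg A)) (ht n).le]
    calc |Real.log (1 - z * t n)| ≤ _ := h2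
      _ ≤ 2 * A ^ 2 * t n + t n + A / 2 * t n := by linarith
      _ = (2 * A ^ 2 + 1 + A / 2) * t n := by ring
  refine ⟨hLsum, hpos, ?_⟩
  have hSsum : HasSum (fun n => Real.log (1 - z * t n) + z * t n + z ^ 2 / 2 * (t n) ^ 2)
      ((∑' n, Real.log (1 - z * t n)) + z * A + z ^ 2 / 2 * B) := by
    have h1 : HasSum (fun n => z * t n) (z * A) := hA_def ▸ hsum.hasSum.mul_left z
    have h2 : HasSum (fun n => z ^ 2 / 2 * (t n) ^ 2) (z ^ 2 / 2 * B) :=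
      hB_def ▸ hBsum.hasSum.mul_left _
    exact (hLsum.hasSum.add h1).add h2
  have hg : HasSum (fun n => 2 * |z| ^ 3 * A ^ 2 * t n) (2 * |z| ^ 3 * A ^ 2 * A) := by
    have := hsum.hasSum.mul_left (2 * |z| ^ 3 * A ^ 2)
    rwa [← hA_def] at this
  have hb := tsum_of_norm_bounded hg (fun n => by rw [Real.norm_eq_abs]; exact hlog n)
  rw [hSsum.tsum_eq, Real.norm_eq_abs] at hb
  calc |(∑' n, Real.log (1 - z * t n)) + z * A + z ^ 2 / 2 * B|
      ≤ 2 * |z| ^ 3 * A ^ 2 * A := hb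
    _ = 2 * |z| ^ 3 * A ^ 3 := by ring

set_option maxHeartbeats 2000000 in
lemma prod_est (t : ℕ → ℝ) (ht : ∀ n, 0 < t n) (hsum : Summable t) :
    ∃ δ K : ℝ, 0 < δ ∧ 0 ≤ K ∧ ∀ z : ℝ, |z| ≤ δ →
      |(∏' n : ℕ, (1 - z * t n)) -
          (1 - (∑' n, t n) * z + (((∑' n, t n) ^ 2 - ∑' n, (t n) ^ 2) / 2) * z ^ 2)| ≤
        K * |z| ^ 3 := by
  set A : ℝ := ∑' n, t n with hA_def
  set B : ℝ := ∑' n, (t n) ^ 2 with hB_def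
  have hA0 : 0 < A := Summable.tsum_pos hsum (fun n => (ht n).le) 0 (ht 0)
  have htle : ∀ n, t n ≤ A := fun n => Summable.le_tsum hsum n (fun m _ => (ht m).le)
  have hBsum : Summable (fun n => (t n) ^ 2) := by
    refine Summable.of_nonneg_of_le (fun n => sq_nonneg _) (fun n => ?_) (hsum.mul_left A)
    nlinarith [htle n, (ht n).le]
  have hB0 : 0 ≤ B := tsum_nonneg (fun n => sq_nonneg _)
  have hBA : B ≤ A ^ 2 := by
    have h1 : B ≤ ∑' n, A * t n := by
      refine Summable.tsum_le_tsum (fun n => ?_) hBsum (hsum.mul_left A)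
      nlinarith [htle n, (ht n).le]
    rw [tsum_mul_left] at h1
    nlinarith
  set C₁ : ℝ := A + A ^ 2 / 2 + 2 * A ^ 3 with hC₁_def
  have hC₁0 : 0 < C₁ := by positivity
  set K : ℝ := C₁ ^ 3 + 2 * A ^ 3 + (2 * A ^ 3 + A ^ 2 / 2) * (C₁ + A) / 2 with hK_def
  refine ⟨min (1 / (2 * A)) 1, K, lt_min (by positivity) one_pos, by positivity, ?_⟩
  intro z hz
  have hz1 : |z| ≤ 1 := hz.trans (min_le_right _ _)
  have hz2 : |z| ≤ 1 / (2 * A) := hz.trans (min_le_left _ _)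
  have hzA : |z| * A ≤ 1 / 2 := by
    rw [le_div_iff₀ (by positivity)] at hz2
    linarith [mul_comm (|z|) A]
  obtain ⟨hLsum, hpos, hS⟩ := logsum_est t ht hsum A B hA_def hB_def z hz1 hz2
  set S : ℝ := ∑' n, Real.log (1 - z * t n) with hS_def
  -- product equals exp S
  have hprod_exp : (∏' n : ℕ, (1 - z * t n)) = Real.exp S := by
    have := Real.rexp_tsum_eq_tprod (ι := ℕ)
      (f := fun n => 1 - z * t n) (fun n => hpos n) hLsum
    have h2 := this
    simpa using h2.symm
  -- bounds on S
  have hzB : |z ^ 2 / 2 * B| ≤ |z| * A ^ 2 / 2 := by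
    rw [abs_mul, abs_of_nonneg hB0, abs_div, abs_of_nonneg (sq_nonneg z), abs_two]
    have hzz : z ^ 2 = |z| * |z| := by rw [← abs_mul, abs_of_nonneg (mul_self_nonneg z), sq]
    nlinarith [mul_nonneg (sub_nonneg.2 hz1) (mul_nonneg (abs_nonneg z) hB0),
      mul_nonneg (abs_nonneg z) (sub_nonneg.2 hBA)]
  have hzA' : |z * A| = |z| * A := by rw [abs_mul, abs_of_pos hA0]
  have hz3 : |z| ^ 3 ≤ |z| := by nlinarith [abs_nonneg z, sq_nonneg (|z|)]
  have hSC : |S| ≤ C₁ * |z| := by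
    have h1 := abs_le_three S (z * A) (z ^ 2 / 2 * B)
    have h4 : 2 * |z| ^ 3 * A ^ 3 ≤ 2 * |z| * A ^ 3 := by
      nlinarith [pow_nonneg hA0.le 3]
    calc |S| ≤ _ := h1
      _ ≤ 2 * |z| * A ^ 3 + |z| * A + |z| * A ^ 2 / 2 := by
          rw [hzA']; linarith
      _ = C₁ * |z| := by rw [hC₁_def]; ring
  have hS1 : |S| ≤ 1 := by
    have h1 := abs_le_three S (z * A) (z ^ 2 / 2 * B)
    have h2 : |z * A| ≤ 1 / 2 := by rw [hzA']; exact hzA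
    have h3 : |z ^ 2 / 2 * B| ≤ 1 / 8 := by
      have e1 : |z ^ 2 / 2 * B| = z ^ 2 / 2 * B := abs_of_nonneg (by positivity)
      have e2 : z ^ 2 * A ^ 2 = (|z| * A) ^ 2 := by rw [mul_pow, sq_abs]
      have e3 : (|z| * A) ^ 2 ≤ (1/2) ^ 2 := pow_le_pow_left₀ (by positivity) hzA 2
      nlinarith [mul_le_mul_of_nonneg_left hBA (sq_nonneg z)]
    have h4 : 2 * |z| ^ 3 * A ^ 3 ≤ 1 / 4 := by
      have h5 : (|z| * A) ^ 3 ≤ (1/2) ^ 3 := pow_le_pow_left₀ (by positivity) hzA 3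
      nlinarith [abs_nonneg z, hA0.le]
    linarith
  have hexp := exp3 S hS1
  rw [hprod_exp]
  have hid : Real.exp S - (1 - A * z + ((A ^ 2 - B) / 2) * z ^ 2)
      = (Real.exp S - (1 + S + S ^ 2 / 2)) + (S + z * A + z ^ 2 / 2 * B)
        + (S + z * A) * (S - z * A) / 2 := by ring
  have h2 : |S + z * A| ≤ (2 * A ^ 3 + A ^ 2 / 2) * |z| ^ 2 := by
    have e : S + z * A = (S + z * A + z ^ 2 / 2 * B) - z ^ 2 / 2 * B := by ring
    rw [e]
    have h' : |(S + z * A + z ^ 2 / 2 * B) - z ^ 2 / 2 * B|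
        ≤ |S + z * A + z ^ 2 / 2 * B| + |z ^ 2 / 2 * B| := abs_sub _ _
    have h3 : |z ^ 2 / 2 * B| ≤ A ^ 2 / 2 * |z| ^ 2 := by
      rw [abs_mul, abs_of_nonneg hB0, abs_div, abs_of_nonneg (sq_nonneg z), abs_two]
      have hzz : z ^ 2 = |z| ^ 2 := (sq_abs z).symm
      nlinarith [mul_nonneg (sq_nonneg (|z|)) (sub_nonneg.2 hBA)]
    have h4 : 2 * |z| ^ 3 * A ^ 3 ≤ 2 * A ^ 3 * |z| ^ 2 := by
      have : |z| ^ 3 ≤ |z| ^ 2 := by nlinarith [abs_nonneg z, sq_nonneg (|z|)]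
      nlinarith [pow_nonneg hA0.le 3]
    calc |(S + z * A + z ^ 2 / 2 * B) - z ^ 2 / 2 * B| ≤ _ := h'
      _ ≤ 2 * A ^ 3 * |z| ^ 2 + A ^ 2 / 2 * |z| ^ 2 := by linarith
      _ = (2 * A ^ 3 + A ^ 2 / 2) * |z| ^ 2 := by ring
  have h3 : |S - z * A| ≤ (C₁ + A) * |z| := by
    have h' : |S - z * A| ≤ |S| + |z * A| := abs_sub _ _
    calc |S - z * A| ≤ |S| + |z * A| := h'
      _ ≤ C₁ * |z| + |z| * A := by rw [hzA']; linarith [hSC]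
      _ = (C₁ + A) * |z| := by ring
  have h4 : |S| ^ 3 ≤ C₁ ^ 3 * |z| ^ 3 := by
    calc |S| ^ 3 ≤ (C₁ * |z|) ^ 3 := pow_le_pow_left₀ (abs_nonneg S) hSC 3
      _ = C₁ ^ 3 * |z| ^ 3 := by ring
  have h5 : |(S + z * A) * (S - z * A) / 2|
      ≤ (2 * A ^ 3 + A ^ 2 / 2) * (C₁ + A) * |z| ^ 3 / 2 := by
    rw [abs_div, abs_two, abs_mul]
    have := mul_le_mul h2 h3 (abs_nonneg _) (by positivity)
    calc |S + z * A| * |S - z * A| / 2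
        ≤ ((2 * A ^ 3 + A ^ 2 / 2) * |z| ^ 2) * ((C₁ + A) * |z|) / 2 := by linarith
      _ = (2 * A ^ 3 + A ^ 2 / 2) * (C₁ + A) * |z| ^ 3 / 2 := by ring
  rw [hid]
  calc |(Real.exp S - (1 + S + S ^ 2 / 2)) + (S + z * A + z ^ 2 / 2 * B)
        + (S + z * A) * (S - z * A) / 2|
      ≤ |(Real.exp S - (1 + S + S ^ 2 / 2)) + (S + z * A + z ^ 2 / 2 * B)|
        + |(S + z * A) * (S - z * A) / 2| := abs_add_le _ _
    _ ≤ |Real.exp S - (1 + S + S ^ 2 / 2)| + |S + z * A + z ^ 2 / 2 * B|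
        + |(S + z * A) * (S - z * A) / 2| := by
          linarith [abs_add_le (Real.exp S - (1 + S + S ^ 2 / 2)) (S + z * A + z ^ 2 / 2 * B)]
    _ ≤ C₁ ^ 3 * |z| ^ 3 + 2 * |z| ^ 3 * A ^ 3
        + (2 * A ^ 3 + A ^ 2 / 2) * (C₁ + A) * |z| ^ 3 / 2 := by
          have hcomb := add_le_add (add_le_add (hexp.trans h4) hS) h5
          linarith [hcomb]
    _ = K * |z| ^ 3 := by rw [hK_def]; ring



lemma gamma_add_nat_eq (a : ℝ) (ha : 0 < a) (m : ℕ) :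
    Real.Gamma (a + m) = (∏ k ∈ range m, (a + k)) * Real.Gamma a := by
  induction m with
  | zero => simp
  | succ m ih =>
      have h1 : a + (m + 1 : ℕ) = (a + m) + 1 := by push_cast; ring
      have h2 : a + (m : ℝ) ≠ 0 := by positivity
      rw [h1, Real.Gamma_add_one h2, ih, prod_range_succ]
      ring

lemma gamma_lower (a : ℝ) (ha : 0 < a) (m : ℕ) (hm : 1 ≤ m) :
    a * Real.Gamma a ≤ Real.Gamma (a + m) := by
  rw [gamma_add_nat_eq a ha m]
  have h0 : (0 : ℕ) ∈ range m := Finset.mem_range.mpr hm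
  rw [← Finset.mul_prod_erase (range m) _ h0]
  have h1 : (1 : ℝ) ≤ ∏ k ∈ (range m).erase 0, (a + k) := by
    calc (1 : ℝ) = ∏ _k ∈ (range m).erase 0, (1 : ℝ) := by simp
      _ ≤ ∏ k ∈ (range m).erase 0, (a + k) := by
          apply Finset.prod_le_prod (fun i _ => zero_le_one)
          intro k hk
          have hk0 : k ≠ 0 := (Finset.mem_erase.mp hk).1
          have : (1 : ℝ) ≤ (k : ℝ) := by exact_mod_cast Nat.one_le_iff_ne_zero.mpr hk0
          linarith
  have hGa : 0 < Real.Gamma a := Real.Gamma_pos_of_pos ha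
  push_cast
  have key : a ≤ (a + 0) * ∏ k ∈ (range m).erase 0, (a + (k:ℝ)) := by nlinarith
  exact mul_le_mul_of_nonneg_right key hGa.le

lemma eq_zero_of_le_lin {x C δ : ℝ} (hδ : 0 < δ)
    (h : ∀ ε : ℝ, 0 < ε → ε ≤ δ → |x| ≤ C * ε) : x = 0 := by
  by_contra hx
  have hx' : 0 < |x| := abs_pos.mpr hx
  have hC : 0 < C := by
    have := h δ hδ le_rfl
    nlinarith
  have hε : 0 < min δ (|x| / (2 * C)) := lt_min hδ (by positivity)
  have h1 := h _ hε (min_le_left _ _)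
  have h2 : C * min δ (|x| / (2 * C)) ≤ C * (|x| / (2 * C)) :=
    mul_le_mul_of_nonneg_left (min_le_right _ _) hC.le
  have h3 : C * (|x| / (2 * C)) = |x| / 2 := by field_simp
  nlinarith

lemma coeffs_zero {δ M p r : ℝ} (hδ : 0 < δ) (hM : 0 ≤ M)
    (h : ∀ z : ℝ, 0 < z → z ≤ δ → |p * z + r * z ^ 2| ≤ M * z ^ 3) :
    p = 0 ∧ r = 0 := by
  set δ' := min δ 1 with hδ'def
  have hδ'0 : 0 < δ' := lt_min hδ one_pos
  have hδ'1 : δ' ≤ 1 := min_le_right _ _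
  have hδ'δ : δ' ≤ δ := min_le_left _ _
  have hp : p = 0 := by
    apply eq_zero_of_le_lin (C := M + |r|) hδ'0
    intro ε hε1 hε2
    have h3 := h ε hε1 (hε2.trans hδ'δ)
    have h4 : |p * ε| ≤ |p * ε + r * ε ^ 2| + |r * ε ^ 2| := by
      have := abs_add_le (p * ε + r * ε ^ 2) (-(r * ε ^ 2))
      simpa using this
    have h5 : |p * ε| = |p| * ε := by rw [abs_mul, abs_of_pos hε1]
    have h6 : |r * ε ^ 2| = |r| * ε ^ 2 := by
      rw [abs_mul, abs_pow, abs_of_pos hε1]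
    have hεle1 : ε ≤ 1 := hε2.trans hδ'1
    have hMe : M * ε ^ 3 ≤ M * ε ^ 2 := by
      nlinarith [mul_nonneg (mul_nonneg hM (sq_nonneg ε)) (by linarith : (0:ℝ) ≤ 1 - ε)]
    have hstep : |p| * ε ≤ (M + |r|) * ε ^ 2 := by nlinarith [abs_nonneg r, abs_nonneg p]
    have hfin : |p| ≤ (M + |r|) * ε := by nlinarith [mul_pos hε1 hε1, abs_nonneg p]
    exact hfin
  refine ⟨hp, ?_⟩
  apply eq_zero_of_le_lin (C := M) hδ'0
  intro ε hε1 hε2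
  have h3 := h ε hε1 (hε2.trans hδ'δ)
  rw [hp] at h3
  have h6 : |r * ε ^ 2| = |r| * ε ^ 2 := by rw [abs_mul, abs_pow, abs_of_pos hε1]
  simp only [zero_mul, zero_add] at h3
  rw [h6] at h3
  nlinarith [mul_pos hε1 hε1]

set_option maxHeartbeats 1000000 in

lemma series_est (q : ℕ) (hq : 1 ≤ q) (a c : ℝ) (ha : 0 < a) (hc : 0 < c) :
    ∃ K : ℝ, 0 ≤ K ∧ ∀ z : ℝ, |z| ≤ 1 / (c + 1) →
      |Real.Gamma a * ∑' n : ℕ, (-1) ^ n * c ^ n * (n + 1) * z ^ n /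
            ((n.factorial : ℝ) * Real.Gamma ((q : ℝ) * n + a)) -
          (1 - (2 * c * Real.Gamma a / Real.Gamma ((q : ℝ) + a)) * z +
            (3 * c ^ 2 * Real.Gamma a / (2 * Real.Gamma (2 * (q : ℝ) + a))) * z ^ 2)| ≤
        K * |z| ^ 3 := by
  have hΓa : 0 < Real.Gamma a := Real.Gamma_pos_of_pos ha
  have hGpos : ∀ n : ℕ, 0 < Real.Gamma ((q : ℝ) * n + a) := by
    intro n
    apply Real.Gamma_pos_of_pos
    have h1 : (0:ℝ) ≤ (q:ℝ) * n := by positivity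
    linarith
  have hGlow : ∀ n : ℕ, 1 ≤ n → a * Real.Gamma a ≤ Real.Gamma ((q : ℝ) * n + a) := by
    intro n hn
    have e : (q : ℝ) * n + a = a + ((q * n : ℕ) : ℝ) := by push_cast; ring
    rw [e]
    exact gamma_lower a ha (q * n) (Nat.one_le_iff_ne_zero.mpr
      (Nat.mul_ne_zero (Nat.one_le_iff_ne_zero.mp hq) (Nat.one_le_iff_ne_zero.mp hn)))
  set m₀ : ℝ := min (Real.Gamma a) (a * Real.Gamma a) with hm₀_def
  have hm₀ : 0 < m₀ := lt_min hΓa (by positivity)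
  have hGm : ∀ n : ℕ, m₀ ≤ Real.Gamma ((q : ℝ) * n + a) := by
    intro n
    match n with
    | 0 =>
        have e : (q : ℝ) * (0:ℕ) + a = a := by norm_num
        rw [e]
        exact min_le_left _ _
    | Nat.succ k =>
        exact le_trans (min_le_right _ _) (hGlow (k+1) (Nat.succ_le_succ (Nat.zero_le k)))
  -- absolute value formula
  have habs : ∀ (z : ℝ) (m : ℕ),
      |(-1) ^ m * c ^ m * ((m:ℝ) + 1) * z ^ m / ((m.factorial : ℝ) * Real.Gamma ((q : ℝ) * m + a))|
      = c ^ m * ((m:ℝ) + 1) * |z| ^ m / ((m.factorial : ℝ) * Real.Gamma ((q : ℝ) * m + a)) := by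
    intro z m
    rw [abs_div, abs_mul, abs_mul, abs_mul, abs_pow, abs_pow, abs_pow, abs_neg, abs_one,
      one_pow, one_mul, abs_of_pos hc,
      abs_of_nonneg (by positivity : (0:ℝ) ≤ (m:ℝ) + 1),
      abs_mul, abs_of_nonneg (by positivity : (0:ℝ) ≤ ((m.factorial : ℕ) : ℝ)),
      abs_of_pos (hGpos m)]
  -- summability for every z
  have hu_sum : ∀ z : ℝ, Summable (fun n : ℕ =>
      (-1) ^ n * c ^ n * ((n:ℝ) + 1) * z ^ n /
        ((n.factorial : ℝ) * Real.Gamma ((q : ℝ) * n + a))) := by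
    intro z
    apply summable_abs_iff.mp
    have hg : Summable (fun n : ℕ => (2 * (c * |z|)) ^ n / (n.factorial : ℝ) * (1 / m₀)) :=
      (Real.summable_pow_div_factorial (2 * (c * |z|))).mul_right _
    refine Summable.of_nonneg_of_le (fun n => abs_nonneg _) (fun n => ?_) hg
    rw [habs z n]
    have h1 : c ^ n * ((n:ℝ) + 1) * |z| ^ n ≤ (2 * (c * |z|)) ^ n := by
      have h2 : ((n:ℝ) + 1) ≤ 2 ^ n := by exact_mod_cast (Nat.lt_two_pow_self (n := n))
      have h3 : (2 * (c * |z|)) ^ n = 2 ^ n * (c ^ n * |z| ^ n) := by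
        rw [mul_pow, mul_pow]
      rw [h3]
      have h4 : (0:ℝ) ≤ c ^ n * |z| ^ n := by positivity
      nlinarith [mul_le_mul_of_nonneg_right h2 h4]
    have h5 : (n.factorial : ℝ) * m₀ ≤ (n.factorial : ℝ) * Real.Gamma ((q : ℝ) * n + a) :=
      mul_le_mul_of_nonneg_left (hGm n) (by positivity)
    calc c ^ n * ((n:ℝ) + 1) * |z| ^ n / ((n.factorial : ℝ) * Real.Gamma ((q : ℝ) * n + a))
        ≤ (2 * (c * |z|)) ^ n / ((n.factorial : ℝ) * m₀) := by
          apply div_le_div₀ (by positivity) h1 (by positivity) h5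
      _ = (2 * (c * |z|)) ^ n / (n.factorial : ℝ) * (1 / m₀) := by
          rw [div_mul_div_comm, mul_one]
  -- factorial inequality
  have hfact : ∀ n : ℕ, ((n:ℝ) + 4) / ((n+3).factorial : ℝ) ≤ 1 / (n.factorial : ℝ) := by
    intro n
    have e : ((n+3).factorial : ℝ) = ((n:ℝ)+3) * ((n:ℝ)+2) * ((n:ℝ)+1) * (n.factorial : ℝ) := by
      have e1 : n + 3 = (n + 2) + 1 := rfl
      have e2 : n + 2 = (n + 1) + 1 := rfl
      rw [e1, Nat.factorial_succ, e2, Nat.factorial_succ, Nat.factorial_succ]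
      push_cast
      ring
    rw [div_le_div_iff₀ (by positivity) (by positivity), e]
    have hfn : (0:ℝ) < (n.factorial : ℝ) := by exact_mod_cast n.factorial_pos
    have hpoly : (0:ℝ) ≤ ((n:ℝ)+3)*((n:ℝ)+2)*((n:ℝ)+1) - ((n:ℝ)+4) := by
      nlinarith [pow_nonneg (Nat.cast_nonneg (α := ℝ) n) 3, sq_nonneg ((n:ℝ)),
        Nat.cast_nonneg (α := ℝ) n]
    nlinarith [mul_le_mul_of_nonneg_right (by linarith [hpoly] :
      ((n:ℝ)+4) ≤ ((n:ℝ)+3)*((n:ℝ)+2)*((n:ℝ)+1)) hfn.le]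
  -- the sum of 1/n!
  set E : ℝ := ∑' n : ℕ, (1 : ℝ) / (n.factorial : ℝ) with hE_def
  have hEsum : Summable (fun n : ℕ => (1 : ℝ) / (n.factorial : ℝ)) := by
    have := Real.summable_pow_div_factorial 1
    refine this.congr fun n => ?_
    rw [one_pow]
  have hE0 : 0 ≤ E := tsum_nonneg (fun n => by positivity)
  refine ⟨Real.Gamma a * (c ^ 3 / (a * Real.Gamma a) * E), by positivity, ?_⟩
  intro z hz
  have hcz : c * |z| ≤ 1 := by
    rw [le_div_iff₀ (by positivity)] at hz
    nlinarith [abs_nonneg z]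
  -- tail bound
  have htail_term : ∀ n : ℕ,
      |(-1) ^ (n+3) * c ^ (n+3) * (((n+3:ℕ):ℝ) + 1) * z ^ (n+3) /
        (((n+3).factorial : ℝ) * Real.Gamma ((q : ℝ) * ((n+3:ℕ):ℝ) + a))|
      ≤ (c * |z|) ^ 3 / (a * Real.Gamma a) * (1 / (n.factorial : ℝ)) := by
    intro n
    rw [habs z (n+3)]
    have hGl := hGlow (n+3) (by omega)
    have h1 : c ^ (n+3) * (((n+3:ℕ):ℝ) + 1) * |z| ^ (n+3) /
        (((n+3).factorial : ℝ) * Real.Gamma ((q : ℝ) * ((n+3:ℕ):ℝ) + a))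
        ≤ (c * |z|) ^ (n+3) * (((n:ℝ)) + 4) / (((n+3).factorial : ℝ) * (a * Real.Gamma a)) := by
      apply div_le_div₀ (by positivity) ?_ (by positivity)
        (mul_le_mul_of_nonneg_left hGl (by positivity))
      have e : c ^ (n+3) * (((n+3:ℕ):ℝ) + 1) * |z| ^ (n+3)
          = (c * |z|) ^ (n+3) * (((n:ℝ)) + 4) := by
        rw [mul_pow]
        push_cast
        ring
      rw [e]
    refine h1.trans ?_
    have h2 : (c * |z|) ^ (n+3) ≤ (c * |z|) ^ 3 :=
      pow_le_pow_of_le_one (by positivity) hcz (by omega)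
    have h3 : (c * |z|) ^ (n+3) * ((n:ℝ) + 4) / (((n+3).factorial : ℝ) * (a * Real.Gamma a))
        ≤ (c * |z|) ^ 3 * ((n:ℝ) + 4) / (((n+3).factorial : ℝ) * (a * Real.Gamma a)) := by
      apply (div_le_div_iff_of_pos_right (by positivity)).mpr
      exact mul_le_mul_of_nonneg_right h2 (by positivity)
    refine h3.trans ?_
    have e2 : (c * |z|) ^ 3 * ((n:ℝ) + 4) / (((n+3).factorial : ℝ) * (a * Real.Gamma a))
        = (c * |z|) ^ 3 / (a * Real.Gamma a) * (((n:ℝ) + 4) / (((n+3).factorial : ℝ))) := by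
      rw [div_mul_div_comm, mul_comm (a * Real.Gamma a) (((n+3).factorial : ℝ))]
    rw [e2]
    exact mul_le_mul_of_nonneg_left (hfact n) (by positivity)
  -- tail sum bound
  have hgsum : HasSum (fun n : ℕ => (c * |z|) ^ 3 / (a * Real.Gamma a) * (1 / (n.factorial : ℝ)))
      ((c * |z|) ^ 3 / (a * Real.Gamma a) * E) := by
    rw [hE_def]
    exact hEsum.hasSum.mul_left _
  have htail : ‖∑' n : ℕ, (-1) ^ (n+3) * c ^ (n+3) * (((n+3:ℕ):ℝ) + 1) * z ^ (n+3) /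
        (((n+3).factorial : ℝ) * Real.Gamma ((q : ℝ) * ((n+3:ℕ):ℝ) + a))‖
      ≤ (c * |z|) ^ 3 / (a * Real.Gamma a) * E :=
    tsum_of_norm_bounded hgsum (fun n => by rw [Real.norm_eq_abs]; exact htail_term n)
  rw [Real.norm_eq_abs] at htail
  -- split the sum
  have hsplit := Summable.sum_add_tsum_nat_add 3 (hu_sum z)
  have hΓqa : Real.Gamma ((q:ℝ) + a) ≠ 0 := by
    refine (Real.Gamma_pos_of_pos ?_).ne'
    have : (0:ℝ) ≤ (q:ℝ) := Nat.cast_nonneg q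
    linarith
  have hΓ2qa : Real.Gamma (2 * (q:ℝ) + a) ≠ 0 := by
    refine (Real.Gamma_pos_of_pos ?_).ne'
    have : (0:ℝ) ≤ (q:ℝ) := Nat.cast_nonneg q
    linarith
  have hrange : (∑ i ∈ range 3, (-1) ^ i * c ^ i * ((i:ℝ) + 1) * z ^ i /
        ((i.factorial : ℝ) * Real.Gamma ((q : ℝ) * i + a)))
      = 1 / Real.Gamma a - 2 * c * z / Real.Gamma ((q:ℝ) + a)
        + 3 * c ^ 2 * z ^ 2 / (2 * Real.Gamma (2 * (q:ℝ) + a)) := by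
    rw [Finset.sum_range_succ, Finset.sum_range_succ, Finset.sum_range_succ,
      Finset.sum_range_zero]
    have e0 : (q : ℝ) * ((0:ℕ):ℝ) + a = a := by norm_num
    have e1 : (q : ℝ) * ((1:ℕ):ℝ) + a = (q:ℝ) + a := by norm_num
    have e2 : (q : ℝ) * ((2:ℕ):ℝ) + a = 2 * (q:ℝ) + a := by push_cast; ring
    norm_num [e0, e1, e2, Nat.factorial]
    ring
  have key : Real.Gamma a * (∑' n : ℕ, (-1) ^ n * c ^ n * ((n:ℝ) + 1) * z ^ n /
        ((n.factorial : ℝ) * Real.Gamma ((q : ℝ) * n + a))) -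
      (1 - (2 * c * Real.Gamma a / Real.Gamma ((q : ℝ) + a)) * z +
        (3 * c ^ 2 * Real.Gamma a / (2 * Real.Gamma (2 * (q : ℝ) + a))) * z ^ 2)
      = Real.Gamma a * ∑' n : ℕ, (-1) ^ (n+3) * c ^ (n+3) * (((n+3:ℕ):ℝ) + 1) * z ^ (n+3) /
        (((n+3).factorial : ℝ) * Real.Gamma ((q : ℝ) * ((n+3:ℕ):ℝ) + a)) := by
    rw [← hsplit, hrange]
    field_simp
    ring
  rw [key, abs_mul, abs_of_pos hΓa]
  calc Real.Gamma a * |∑' n : ℕ, (-1) ^ (n+3) * c ^ (n+3) * (((n+3:ℕ):ℝ) + 1) * z ^ (n+3) /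
        (((n+3).factorial : ℝ) * Real.Gamma ((q : ℝ) * ((n+3:ℕ):ℝ) + a))|
      ≤ Real.Gamma a * ((c * |z|) ^ 3 / (a * Real.Gamma a) * E) :=
        mul_le_mul_of_nonneg_left htail hΓa.le
    _ = Real.Gamma a * (c ^ 3 / (a * Real.Gamma a) * E) * |z| ^ 3 := by ring

theorem stmt_12 (q : ℕ) (hq : 1 ≤ q) (a c : ℝ) (ha : 0 < a) (hc : 0 < c)
    (Υ : ℝ → ℝ)
    (hΥ : ∀ z : ℝ, Υ z =
      Real.Gamma a *
        ∑' n : ℕ, (-1) ^ n * c ^ n * (n + 1) * z ^ n /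
          ((n.factorial : ℝ) * Real.Gamma ((q : ℝ) * n + a)))
    (ς : ℕ → ℝ) (hςpos : ∀ n, 0 < ς n) (hςsum : Summable fun n => 1 / ς n)
    (hprod : ∀ z : ℝ, Υ z = ∏' n : ℕ, (1 - z / ς n)) :
    (∑' n : ℕ, 1 / ς n) = 2 * c * Real.Gamma a / Real.Gamma ((q : ℝ) + a) ∧
    (∑' n : ℕ, (1 / ς n) ^ 2) =
      4 * c ^ 2 * Real.Gamma a ^ 2 / Real.Gamma ((q : ℝ) + a) ^ 2 -
        3 * c ^ 2 * Real.Gamma a / Real.Gamma (2 * (q : ℝ) + a) := by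
  obtain ⟨K₁, hK₁, hser⟩ := series_est q hq a c ha hc
  set t : ℕ → ℝ := fun n => 1 / ς n with ht_def
  have ht : ∀ n, 0 < t n := fun n => one_div_pos.mpr (hςpos n)
  obtain ⟨δ, K₂, hδ, hK₂, hpr⟩ := prod_est t ht hςsum
  set A : ℝ := ∑' n, t n with hA_def
  set B : ℝ := ∑' n, (t n) ^ 2 with hB_def
  have hprod' : ∀ z : ℝ, Υ z = ∏' n : ℕ, (1 - z * t n) := by
    intro z
    rw [hprod z]
    congr 1
    funext n
    rw [ht_def]
    rw [mul_one_div]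
  set α : ℝ := 2 * c * Real.Gamma a / Real.Gamma ((q : ℝ) + a) with hα_def
  set β : ℝ := 3 * c ^ 2 * Real.Gamma a / (2 * Real.Gamma (2 * (q : ℝ) + a)) with hβ_def
  set δ₀ : ℝ := min δ (1 / (c + 1)) with hδ₀_def
  have hδ₀ : 0 < δ₀ := lt_min hδ (by positivity)
  have hkey : ∀ z : ℝ, 0 < z → z ≤ δ₀ →
      |(A - α) * z + (β - (A ^ 2 - B) / 2) * z ^ 2| ≤ (K₁ + K₂) * z ^ 3 := by
    intro z hz0 hzδ
    have hzabs : |z| = z := abs_of_pos hz0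
    have h1 := hser z (by rw [hzabs]; exact hzδ.trans (min_le_right _ _))
    have h2 := hpr z (by rw [hzabs]; exact hzδ.trans (min_le_left _ _))
    rw [← hΥ z] at h1
    rw [← hprod' z] at h2
    have hident : (A - α) * z + (β - (A ^ 2 - B) / 2) * z ^ 2 =
        (Υ z - (1 - A * z + ((A ^ 2 - B) / 2) * z ^ 2)) -
        (Υ z - (1 - α * z + β * z ^ 2)) := by ring
    rw [hident]
    calc |(Υ z - (1 - A * z + ((A ^ 2 - B) / 2) * z ^ 2)) -
            (Υ z - (1 - α * z + β * z ^ 2))|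
        ≤ |Υ z - (1 - A * z + ((A ^ 2 - B) / 2) * z ^ 2)| +
            |Υ z - (1 - α * z + β * z ^ 2)| := abs_sub _ _
      _ ≤ K₂ * |z| ^ 3 + K₁ * |z| ^ 3 := add_le_add h2 h1
      _ = (K₁ + K₂) * z ^ 3 := by rw [hzabs]; ring
  obtain ⟨hp, hr⟩ := coeffs_zero hδ₀ (by linarith) hkey
  have hAα : A = α := by linarith [sub_eq_zero.mp (by linarith : A - α = 0)]
  have hB : B = A ^ 2 - 2 * β := by
    have : β = (A ^ 2 - B) / 2 := by linarith
    linarith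
  have hGqa : Real.Gamma ((q : ℝ) + a) ≠ 0 :=
    (Real.Gamma_pos_of_pos (by have : (0:ℝ) ≤ (q:ℝ) := Nat.cast_nonneg q; linarith)).ne'
  have hG2qa : Real.Gamma (2 * (q : ℝ) + a) ≠ 0 := by
    have hq' : (0:ℝ) < 2 * (q : ℝ) + a := by
      have : (1:ℝ) ≤ (q:ℝ) := by exact_mod_cast hq
      linarith
    exact (Real.Gamma_pos_of_pos hq').ne'
  constructor
  · exact hAα
  · show B = _
    rw [hB, hAα, hα_def, hβ_def]
    field_simp
    ring
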